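/- arXiv:2008.13677 — 2 statements merged into one kernel-verified Lean document; each statement's English description precedes it below -/
import Mathlib

section
/- Let P be a group and let B₁, B₂ be subgroups of P such that the double coset B₁B₂ is separable in P. Then for every finite subset S of P there exists a finite-index normal subgroup K_S of P such that every normal subgroup N of P with N ≤ K_S is (B₁,B₂,S)-wide. -/
/-- The double coset `B₁B₂ = {b₁ * b₂ : b₁ ∈ B₁, b₂ ∈ B₂}` of two subgroups. -/
def DoubleCoset {P : Type*} [Group P] (B₁ B₂ : Subgroup P) : Set P :=
  {x : P | ∃ b₁ ∈ B₁, ∃ b₂ ∈ B₂, x = b₁ * b₂}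

/-- The double coset `B₁B₂` is separable in `P`: for every `g ∈ P \ B₁B₂` there is a
finite-index subgroup of `P` containing `B₁B₂` but not `g`. -/
def IsSeparableDoubleCoset {P : Type*} [Group P] (B₁ B₂ : Subgroup P) : Prop :=
  ∀ g : P, g ∉ DoubleCoset B₁ B₂ →
    ∃ H : Subgroup P, H.FiniteIndex ∧ DoubleCoset B₁ B₂ ⊆ (H : Set P) ∧ g ∉ H

/-- A subgroup `N` is `(B₁,B₂,S)`-wide: whenever `b₁ ∈ B₁`, `b₂ ∈ B₂`, `s ∈ S` with
`b₁ * s * b₂ ∈ N`, we have `s ∈ B₁B₂`. -/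
def IsWide {P : Type*} [Group P] (N B₁ B₂ : Subgroup P) (S : Finset P) : Prop :=
  ∀ b₁ ∈ B₁, ∀ b₂ ∈ B₂, ∀ s ∈ S, b₁ * s * b₂ ∈ N → s ∈ DoubleCoset B₁ B₂

/-! The finitely many elements of `S` outside `B₁B₂` are excluded by one finite-index subgroup
`H ⊇ B₁B₂`, the intersection of separating subgroups. Since `H` contains `B₁` and `B₂`,
`b₁ s b₂ ∈ H` forces `s ∈ H`, so `H` is wide, and so is every subgroup of it; the normal
core of `H` is then the required `K`. -/

section

variable {P : Type*} [Group P] {B₁ B₂ : Subgroup P}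

theorem IsWide.mono {N M : Subgroup P} {S : Finset P} (hNM : N ≤ M) (hM : IsWide M B₁ B₂ S) :
    IsWide N B₁ B₂ S :=
  fun b₁ hb₁ b₂ hb₂ s hs hmem => hM b₁ hb₁ b₂ hb₂ s hs (hNM hmem)

theorem left_mem_of_doubleCoset_subset {H : Subgroup P} (hH : DoubleCoset B₁ B₂ ⊆ H)
    {b : P} (hb : b ∈ B₁) : b ∈ H :=
  hH ⟨b, hb, 1, B₂.one_mem, (mul_one b).symm⟩

theorem right_mem_of_doubleCoset_subset {H : Subgroup P} (hH : DoubleCoset B₁ B₂ ⊆ H)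
    {b : P} (hb : b ∈ B₂) : b ∈ H :=
  hH ⟨1, B₁.one_mem, b, hb, (one_mul b).symm⟩

theorem isWide_of_doubleCoset_subset {H : Subgroup P} {S : Finset P}
    (hH : DoubleCoset B₁ B₂ ⊆ H) (hS : ∀ s ∈ S, s ∈ H → s ∈ DoubleCoset B₁ B₂) :
    IsWide H B₁ B₂ S := by
  intro b₁ hb₁ b₂ hb₂ s hs hmem
  refine hS s hs ?_
  rw [H.mul_mem_cancel_right (right_mem_of_doubleCoset_subset hH hb₂),
    H.mul_mem_cancel_left (left_mem_of_doubleCoset_subset hH hb₁)] at hmem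
  exact hmem

theorem IsSeparableDoubleCoset.exists_finiteIndex_isWide (hsep : IsSeparableDoubleCoset B₁ B₂)
    (S : Finset P) : ∃ H : Subgroup P, H.FiniteIndex ∧ IsWide H B₁ B₂ S := by
  have separating : ∀ g : P, ∃ H : Subgroup P, H.FiniteIndex ∧ DoubleCoset B₁ B₂ ⊆ H ∧
      (g ∈ H → g ∈ DoubleCoset B₁ B₂) := by
    intro g
    by_cases hg : g ∈ DoubleCoset B₁ B₂
    · exact ⟨⊤, inferInstance, fun _ _ => Subgroup.mem_top _, fun _ => hg⟩
    · obtain ⟨H, hfi, hsub, hgH⟩ := hsep g hg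
      exact ⟨H, hfi, hsub, fun h => absurd h hgH⟩
  choose H hfi hsub hexcl using separating
  refine ⟨⨅ s ∈ S, H s, Subgroup.finiteIndex_iInf' H fun s _ => hfi s, ?_⟩
  refine isWide_of_doubleCoset_subset ?_ fun s hs hmem => hexcl s ?_
  · intro x hx
    simp only [SetLike.mem_coe, Subgroup.mem_iInf]
    exact fun s _ => hsub s hx
  · exact Subgroup.mem_iInf.mp (Subgroup.mem_iInf.mp hmem s) hs

end

/-- If the double coset `B₁B₂` is separable in `P`, then for every finite subset `S` of
`P` there is a finite-index normal subgroup `K` of `P` such that every normal subgroup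
`N ≤ K` of `P` is `(B₁,B₂,S)`-wide. -/
theorem exists_finiteIndex_normal_wide {P : Type*} [Group P] (B₁ B₂ : Subgroup P)
    (hsep : IsSeparableDoubleCoset B₁ B₂) (S : Finset P) :
    ∃ K : Subgroup P, K.Normal ∧ K.FiniteIndex ∧
      ∀ N : Subgroup P, N.Normal → N ≤ K → IsWide N B₁ B₂ S := by
  obtain ⟨H, hfi, hwide⟩ := hsep.exists_finiteIndex_isWide S
  exact ⟨H.normalCore, Subgroup.normalCore_normal H, inferInstance,
    fun N _ hNK => hwide.mono (hNK.trans (Subgroup.normalCore_le H))⟩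
end

section
/- In a convex geodesic metric space, every geodesic triangle whose insize is at most K is K-thin, for any K ≥ 0. -/
/-! Fix a vertex `a` of the triangle. The two points of a leg fiber at distance `t` from `a` lie
on the two sides issuing from `a`, both traversed from `a` at unit speed, and at `t = (b,c)_a`
these sides reach internal points of the triangle. In a convex space the distance between two
such geodesics grows at most linearly in `t`, so it never exceeds the distance between the
internal points, hence the insize. -/

/-- A unit-speed geodesic from `a` to `b`, defined on `[0, dist a b]`. -/
def IsGeodesicSegment {M : Type*} [MetricSpace M] (γ : ℝ → M) (a b : M) : Prop :=
  γ 0 = a ∧ γ (dist a b) = b ∧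
    ∀ s ∈ Set.Icc (0 : ℝ) (dist a b), ∀ t ∈ Set.Icc (0 : ℝ) (dist a b),
      dist (γ s) (γ t) = |s - t|

/-- A geodesic metric space: every two points are joined by a geodesic. -/
def GeodesicSpace (M : Type*) [MetricSpace M] : Prop :=
  ∀ a b : M, ∃ γ : ℝ → M, IsGeodesicSegment γ a b

/-- A geodesic metric space is convex if for every pair of geodesics, parametrized
proportionally to arc length on `[0,1]`, the distance between corresponding points is a
convex function. -/
def ConvexMetric (M : Type*) [MetricSpace M] : Prop :=
  ∀ (a₁ b₁ a₂ b₂ : M) (γ₁ γ₂ : ℝ → M),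
    IsGeodesicSegment γ₁ a₁ b₁ → IsGeodesicSegment γ₂ a₂ b₂ →
    ConvexOn ℝ (Set.Icc (0 : ℝ) 1)
      (fun t : ℝ => dist (γ₁ (t * dist a₁ b₁)) (γ₂ (t * dist a₂ b₂)))

/-- The Gromov product `(b,c)_a`. -/
noncomputable def gromovProd {M : Type*} [MetricSpace M] (a b c : M) : ℝ :=
  (dist a b + dist a c - dist b c) / 2

/-- A geodesic triangle: vertices `v 0, v 1, v 2` together with a choice of geodesic side
`side i` from `v i` to `v (i+1)`. -/
structure GeodesicTriangle (M : Type*) [MetricSpace M] where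
  v : Fin 3 → M
  side : Fin 3 → ℝ → M
  isGeod : ∀ i : Fin 3, IsGeodesicSegment (side i) (v i) (v (i + 1))

namespace GeodesicTriangle

variable {M : Type*} [MetricSpace M]

/-- The Gromov product of the two other vertices at vertex `i`, i.e. the length of the leg
of the comparison tripod corresponding to vertex `i`. -/
noncomputable def gp (Δ : GeodesicTriangle M) (i : Fin 3) : ℝ :=
  gromovProd (Δ.v i) (Δ.v (i + 1)) (Δ.v (i + 2))

/-- The fiber of the tripod map over the point of the leg at vertex `i` at distance `t`
from its endpoint: the two points at distance `t` from `v i` on the two sides adjacent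
to `v i` (valid for `0 ≤ t ≤ Δ.gp i`). -/
def legFiber (Δ : GeodesicTriangle M) (i : Fin 3) (t : ℝ) : Set M :=
  {Δ.side i t, Δ.side (i + 2) (dist (Δ.v (i + 2)) (Δ.v i) - t)}

/-- The fiber of the tripod map over the central point of the tripod: the three internal
points of the triangle. -/
noncomputable def centralFiber (Δ : GeodesicTriangle M) : Set M :=
  {Δ.side 0 (Δ.gp 0), Δ.side 1 (Δ.gp 1), Δ.side 2 (Δ.gp 2)}

/-- `F` is a fiber of the canonical map `π` from the triangle to its comparison tripod. -/
def IsTripodFiber (Δ : GeodesicTriangle M) (F : Set M) : Prop :=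
  (∃ i : Fin 3, ∃ t : ℝ, 0 ≤ t ∧ t ≤ Δ.gp i ∧ F = Δ.legFiber i t) ∨ F = Δ.centralFiber

/-- A triangle is ν-thin if every fiber of the map to the comparison tripod has diameter
at most ν. -/
def IsThin (Δ : GeodesicTriangle M) (ν : ℝ) : Prop :=
  ∀ F : Set M, Δ.IsTripodFiber F → Metric.diam F ≤ ν

/-- The insize of a triangle: the diameter of the fiber over the central point of the
comparison tripod. -/
noncomputable def insize (Δ : GeodesicTriangle M) : ℝ :=
  Metric.diam Δ.centralFiber

/-- A triangle is ν-thin relative to `U` if it is not ν-thin, and every fiber of the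
tripod map either has diameter at most ν or is contained in the closed ν-neighborhood
of `U`. -/
def IsThinRel (Δ : GeodesicTriangle M) (ν : ℝ) (U : Set M) : Prop :=
  ¬ Δ.IsThin ν ∧
    ∀ F : Set M, Δ.IsTripodFiber F →
      Metric.diam F ≤ ν ∨ F ⊆ Metric.cthickening ν U

/-- The fiber of the tripod map through the point of side `i` at arclength `t` from
`v i`. -/
noncomputable def fiberOnSide (Δ : GeodesicTriangle M) (i : Fin 3) (t : ℝ) : Set M :=
  if t < Δ.gp i then Δ.legFiber i t
  else if Δ.gp i < t then Δ.legFiber (i + 1) (dist (Δ.v i) (Δ.v (i + 1)) - t)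
  else Δ.centralFiber

/-- The ν-fat part of side `i` of the triangle: those points of the side whose fiber under
the tripod map has diameter at least ν. -/
noncomputable def fatPartOfSide (Δ : GeodesicTriangle M) (ν : ℝ) (i : Fin 3) : Set M :=
  Δ.side i '' {t : ℝ | t ∈ Set.Icc 0 (dist (Δ.v i) (Δ.v (i + 1))) ∧
    ν ≤ Metric.diam (Δ.fiberOnSide i t)}

end GeodesicTriangle

/-- `(M, 𝒰)` has ν-relatively thin triangles if every geodesic triangle is either ν-thin
or ν-thin relative to some `U ∈ 𝒰`. -/
def HasRelThinTriangles (M : Type*) [MetricSpace M] (𝒰 : Set (Set M)) (ν : ℝ) : Prop :=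
  ∀ Δ : GeodesicTriangle M, Δ.IsThin ν ∨ ∃ U ∈ 𝒰, Δ.IsThinRel ν U

/-- `(M, 𝒰)` is a (ν,φ)-relatively hyperbolic pair. -/
def IsRelHypPair (M : Type*) [MetricSpace M] (𝒰 : Set (Set M)) (ν : ℝ) (φ : ℝ → ℝ) :
    Prop :=
  HasRelThinTriangles M 𝒰 ν ∧
    ∀ r : ℝ, 0 ≤ r → ∀ F₁ ∈ 𝒰, ∀ F₂ ∈ 𝒰, F₁ ≠ F₂ →
      Metric.diam (Metric.cthickening r F₁ ∩ Metric.cthickening r F₂) ≤ φ r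

/-- A geodesic metric space is CAT(0) iff it satisfies the CN (Bruhat–Tits) inequality,
which is equivalent to the CAT(0) comparison inequality for geodesic triangles. -/
def IsCAT0 (M : Type*) [MetricSpace M] : Prop :=
  GeodesicSpace M ∧
    ∀ x a b m : M, dist a m = dist a b / 2 → dist b m = dist a b / 2 →
      dist x m ^ 2 ≤ (dist x a ^ 2 + dist x b ^ 2) / 2 - dist a b ^ 2 / 4

/-- A subset is geodesically convex if it contains every geodesic between its points. -/
def IsGeodesicallyConvex {M : Type*} [MetricSpace M] (Z : Set M) : Prop :=
  ∀ a ∈ Z, ∀ b ∈ Z, ∀ γ : ℝ → M, IsGeodesicSegment γ a b →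
    ∀ t ∈ Set.Icc (0 : ℝ) (dist a b), γ t ∈ Z

/-- `Z` is η-super-attractive: for any `K ≥ 0` and points `a, b` in the closed
`K`-neighborhood of `Z`, all of the geodesic `[a,b]` except possibly the initial and
terminal segments of length `η + K` lies in `Z`. -/
def IsSuperAttractive {M : Type*} [MetricSpace M] (η : ℝ) (Z : Set M) : Prop :=
  ∀ K : ℝ, 0 ≤ K →
    ∀ a ∈ Metric.cthickening K Z, ∀ b ∈ Metric.cthickening K Z,
      ∀ γ : ℝ → M, IsGeodesicSegment γ a b →
        ∀ t : ℝ, η + K ≤ t → t ≤ dist a b - (η + K) → γ t ∈ Z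

/-- The image of a geodesic from `a` to `b`. -/
def geodesicImage {M : Type*} [MetricSpace M] (γ : ℝ → M) (a b : M) : Set M :=
  γ '' Set.Icc 0 (dist a b)

/-- A geodesic quadrilateral with vertices `x₁ x₂ x₃ x₄` and sides `γ₁ γ₂ γ₃ γ₄`
(where `γᵢ` joins `xᵢ` to `x_{i+1}`, cyclically) is μ-slim if each side is contained in
the closed μ-neighborhood of the union of the other three sides. -/
def IsSlimQuadrilateral {M : Type*} [MetricSpace M] (μ : ℝ) (x₁ x₂ x₃ x₄ : M)
    (γ₁ γ₂ γ₃ γ₄ : ℝ → M) : Prop :=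
  geodesicImage γ₁ x₁ x₂ ⊆ Metric.cthickening μ
      (geodesicImage γ₂ x₂ x₃ ∪ geodesicImage γ₃ x₃ x₄ ∪ geodesicImage γ₄ x₄ x₁) ∧
  geodesicImage γ₂ x₂ x₃ ⊆ Metric.cthickening μ
      (geodesicImage γ₁ x₁ x₂ ∪ geodesicImage γ₃ x₃ x₄ ∪ geodesicImage γ₄ x₄ x₁) ∧
  geodesicImage γ₃ x₃ x₄ ⊆ Metric.cthickening μ
      (geodesicImage γ₁ x₁ x₂ ∪ geodesicImage γ₂ x₂ x₃ ∪ geodesicImage γ₄ x₄ x₁) ∧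
  geodesicImage γ₄ x₄ x₁ ⊆ Metric.cthickening μ
      (geodesicImage γ₁ x₁ x₂ ∪ geodesicImage γ₂ x₂ x₃ ∪ geodesicImage γ₃ x₃ x₄)

/-- The image of `S` under the nearest-point projection to `Z` (as a set of nearest
points). -/
def projSet {M : Type*} [MetricSpace M] (Z S : Set M) : Set M :=
  {p : M | p ∈ Z ∧ ∃ x ∈ S, dist x p = Metric.infDist x Z}

namespace IsGeodesicSegment

variable {M : Type*} [MetricSpace M] {γ : ℝ → M} {a b : M}

lemma dist_apply (h : IsGeodesicSegment γ a b) {s : ℝ} (hs0 : 0 ≤ s) (hs : s ≤ dist a b) :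
    dist a (γ s) = s := by
  rw [← h.1, h.2.2 0 ⟨le_rfl, dist_nonneg⟩ s ⟨hs0, hs⟩, zero_sub, abs_neg, abs_of_nonneg hs0]

lemma restrict (h : IsGeodesicSegment γ a b) {s : ℝ} (hs0 : 0 ≤ s) (hs : s ≤ dist a b) :
    IsGeodesicSegment γ a (γ s) := by
  refine ⟨h.1, by rw [h.dist_apply hs0 hs], fun u hu w hw => ?_⟩
  rw [h.dist_apply hs0 hs] at hu hw
  exact h.2.2 u ⟨hu.1, hu.2.trans hs⟩ w ⟨hw.1, hw.2.trans hs⟩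

lemma reverse (h : IsGeodesicSegment γ a b) :
    IsGeodesicSegment (fun s => γ (dist a b - s)) b a := by
  refine ⟨by simpa using h.2.1, by simpa [dist_comm b a] using h.1, fun s hs u hu => ?_⟩
  rw [dist_comm b a] at hs hu
  rw [h.2.2 _ ⟨by linarith [hs.2], by linarith [hs.1]⟩ _ ⟨by linarith [hu.2], by linarith [hu.1]⟩,
    ← abs_neg]
  ring_nf

end IsGeodesicSegment

lemma ConvexMetric.dist_le_of_isGeodesicSegment {M : Type*} [MetricSpace M]
    (hconv : ConvexMetric M) {a p q : M} {γ₁ γ₂ : ℝ → M} (h₁ : IsGeodesicSegment γ₁ a p)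
    (h₂ : IsGeodesicSegment γ₂ a q) (hpq : dist a p = dist a q) {t : ℝ} (ht0 : 0 ≤ t)
    (ht : t ≤ dist a p) : dist (γ₁ t) (γ₂ t) ≤ dist p q := by
  rcases (ht0.trans ht).eq_or_lt with hr | hr
  · obtain rfl : t = 0 := by linarith
    rw [h₁.1, h₂.1, dist_self]
    exact dist_nonneg
  set f : ℝ → ℝ := fun s => dist (γ₁ (s * dist a p)) (γ₂ (s * dist a q))
  have hf : ConvexOn ℝ (Set.Icc 0 1) f := hconv a p a q γ₁ γ₂ h₁ h₂
  have hmem : t / dist a p ∈ segment ℝ (0 : ℝ) 1 := by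
    rw [segment_eq_Icc zero_le_one]
    exact ⟨div_nonneg ht0 hr.le, (div_le_one hr).2 ht⟩
  have key := hf.le_on_segment ⟨le_rfl, zero_le_one⟩ ⟨zero_le_one, le_rfl⟩ hmem
  simp only [f, zero_mul, one_mul, h₁.1, h₂.1, h₁.2.1, h₂.2.1, dist_self] at key
  rw [← hpq, div_mul_cancel₀ t hr.ne'] at key
  exact key.trans (max_le dist_nonneg le_rfl)

section gromovProd

variable {M : Type*} [MetricSpace M] (a b c : M)

lemma gromovProd_nonneg : 0 ≤ gromovProd a b c := by
  unfold gromovProd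
  linarith [dist_triangle b a c, dist_comm a b]

lemma gromovProd_le_dist_left : gromovProd a b c ≤ dist a b := by
  unfold gromovProd
  linarith [dist_triangle a b c, dist_comm a b]

lemma gromovProd_add_gromovProd : gromovProd a b c + gromovProd c a b = dist c a := by
  unfold gromovProd
  rw [dist_comm a c, dist_comm c b]
  ring

end gromovProd

namespace GeodesicTriangle

variable {M : Type*} [MetricSpace M] (Δ : GeodesicTriangle M)

lemma gp_nonneg (i : Fin 3) : 0 ≤ Δ.gp i :=
  gromovProd_nonneg _ _ _

lemma v_add_two_add_one (i : Fin 3) : Δ.v (i + 2 + 1) = Δ.v i := by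
  congr 1
  revert i
  decide

lemma gp_add_gp_add_two (i : Fin 3) : Δ.gp i + Δ.gp (i + 2) = dist (Δ.v (i + 2)) (Δ.v i) := by
  have h : i + 2 + 2 = i + 1 := by revert i; decide
  rw [gp, gp, Δ.v_add_two_add_one, h, gromovProd_add_gromovProd]

lemma side_gp_mem_centralFiber (j : Fin 3) : Δ.side j (Δ.gp j) ∈ Δ.centralFiber := by
  fin_cases j <;> simp [centralFiber]

lemma dist_le_insize {x y : M} (hx : x ∈ Δ.centralFiber) (hy : y ∈ Δ.centralFiber) :
    dist x y ≤ Δ.insize :=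
  Metric.dist_le_diam_of_mem
    (((Set.finite_singleton _).insert _).insert _).isBounded hx hy

lemma diam_legFiber_le_insize (hconv : ConvexMetric M) (i : Fin 3) {t : ℝ} (ht0 : 0 ≤ t)
    (ht : t ≤ Δ.gp i) : Metric.diam (Δ.legFiber i t) ≤ Δ.insize := by
  have hgp0 := Δ.gp_nonneg i
  have hgp_add := Δ.gp_add_gp_add_two i
  have hgp_le₁ : Δ.gp i ≤ dist (Δ.v i) (Δ.v (i + 1)) := gromovProd_le_dist_left _ _ _
  have hgp_le₂ : Δ.gp i ≤ dist (Δ.v i) (Δ.v (i + 2)) := by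
    linarith [Δ.gp_nonneg (i + 2), dist_comm (Δ.v i) (Δ.v (i + 2))]
  have hrev := (Δ.isGeod (i + 2)).reverse
  rw [Δ.v_add_two_add_one] at hrev
  have hq : Δ.side (i + 2) (dist (Δ.v (i + 2)) (Δ.v i) - Δ.gp i) =
      Δ.side (i + 2) (Δ.gp (i + 2)) := by
    congr 1
    linarith
  rw [legFiber, Metric.diam_pair]
  calc dist (Δ.side i t) (Δ.side (i + 2) (dist (Δ.v (i + 2)) (Δ.v i) - t))
      ≤ dist (Δ.side i (Δ.gp i)) (Δ.side (i + 2) (dist (Δ.v (i + 2)) (Δ.v i) - Δ.gp i)) := by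
        refine hconv.dist_le_of_isGeodesicSegment ((Δ.isGeod i).restrict hgp0 hgp_le₁)
          (hrev.restrict hgp0 hgp_le₂) ?_ ht0 ?_
        · rw [(Δ.isGeod i).dist_apply hgp0 hgp_le₁, hrev.dist_apply hgp0 hgp_le₂]
        · rwa [(Δ.isGeod i).dist_apply hgp0 hgp_le₁]
    _ ≤ Δ.insize := by
        rw [hq]
        exact Δ.dist_le_insize (Δ.side_gp_mem_centralFiber i) (Δ.side_gp_mem_centralFiber _)

end GeodesicTriangle

theorem isThin_of_insize_le_general {M : Type*} [MetricSpace M]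
    (hconv : ConvexMetric M)
    (K : ℝ) (Δ : GeodesicTriangle M) (hins : Δ.insize ≤ K) :
    Δ.IsThin K := by
  rintro F (⟨i, t, ht0, ht, rfl⟩ | rfl)
  · exact (Δ.diam_legFiber_le_insize hconv i ht0 ht).trans hins
  · exact hins

/-- In a convex geodesic metric space, every geodesic triangle whose insize is at most `K`
is `K`-thin, for any `K ≥ 0`. -/
theorem isThin_of_insize_le {M : Type*} [MetricSpace M]
    (hgeo : GeodesicSpace M) (hconv : ConvexMetric M)
    (K : ℝ) (hK : 0 ≤ K) (Δ : GeodesicTriangle M) (hins : Δ.insize ≤ K) :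
    Δ.IsThin K :=
  isThin_of_insize_le_general hconv K Δ hins
end
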